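/- Let n, r, s be nonnegative integers, let a, b, c, p, x ∈ ℂ and a₁,…,a_r, b₁,…,b_s ∈ ℂ. Assume bc − p(a−p) ≠ 0 and set γ = p(a−p)(b+c−a)/(bc − p(a−p)). Assume the parameters are nondegenerate for the identity below. Then the terminating sum ᵣ₊₆Fₛ₊₄(a, b, c, a−p+1, p+1, a₁,…,a_r, −n; 1+a−b, 1+a−c, p, a−p, b₁,…,b_s; x) equals Σ_{m=0}^{n} [ (a/2)_m ((a+1)/2)_m (a−b−c)_m (γ+1)_m (a₁)_m⋯(a_r)_m (−n)_m (−4x)^m / ( m! (1+a−b)_m (1+a−c)_m (γ)_m (b₁)_m⋯(b_s)_m ) ] · ᵣ₊₂Fₛ(a+2m, a₁+m, …, a_r+m, −(n−m); b₁+m, …, b_s+m; x). -/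

import Mathlib

/-- Rising factorial (Pochhammer symbol) `(a)ₖ = a(a+1)⋯(a+k−1)`. -/
noncomputable def poch (a : ℂ) (k : ℕ) : ℂ := (ascPochhammer ℂ k).eval a

/-- Terminating hypergeometric sum with numerator parameters `A` together with
the extra top parameter `-n`, denominator parameters `B`, and argument `x`. -/
noncomputable def hypTerm (A B : List ℂ) (n : ℕ) (x : ℂ) : ℂ :=
  ∑ k ∈ Finset.range (n + 1),
    ((A.map fun a => poch a k).prod * poch (-(n : ℂ)) k) /
      ((k.factorial : ℂ) * (B.map fun b => poch b k).prod) * x ^ k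

/-!
Expanding the inner sums on the right and collecting powers of `x` reduces the identity to one
identity per coefficient of `x^K`; the parameters `aᵢ`, `bᵢ`, `-n` factor out because
`(z)_m (z+m)_{K-m} = (z)_K`. By the duplication formula `4^m (a/2)_m ((a+1)/2)_m = (a)_{2m}` and
`(γ+1)_m / (γ)_m = (γ+m)/γ`, the coefficient identity becomes a terminating sum carrying the linear
factor `γ + m`. Multiplying by `bc - p(a-p)` turns that factor into
`p(a-p)(b+c-a) + m(bc - p(a-p))`, and the resulting sum is evaluated by two applications of the
Pfaff–Saalschütz summation, which in turn follows from the Chu–Vandermonde identity.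
-/

open Finset

lemma poch_zero (a : ℂ) : poch a 0 = 1 := by simp [poch]

lemma poch_one (a : ℂ) : poch a 1 = a := by simp [poch]

lemma poch_succ (a : ℂ) (k : ℕ) : poch a (k + 1) = poch a k * (a + k) :=
  ascPochhammer_succ_eval k a

lemma poch_succ' (a : ℂ) (k : ℕ) : poch a (k + 1) = a * poch (a + 1) k := by
  simp [poch, ascPochhammer_succ_left]

lemma poch_add (a : ℂ) (m k : ℕ) : poch a (m + k) = poch a m * poch (a + m) k := by
  simp [poch, ← ascPochhammer_mul]

lemma poch_mul_poch_add_sub (a : ℂ) {m K : ℕ} (hmK : m ≤ K) :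
    poch a m * poch (a + m) (K - m) = poch a K := by
  rw [← poch_add, Nat.add_sub_cancel' hmK]

lemma poch_ne_zero_of_le {a : ℂ} {m K : ℕ} (hmK : m ≤ K) (h : poch a K ≠ 0) : poch a m ≠ 0 := by
  rw [← poch_mul_poch_add_sub a hmK] at h
  exact left_ne_zero_of_mul h

lemma ne_zero_of_poch_ne_zero {a : ℂ} {K : ℕ} (hK : K ≠ 0) (h : poch a K ≠ 0) : a ≠ 0 := by
  simpa [poch_one] using poch_ne_zero_of_le (Nat.one_le_iff_ne_zero.mpr hK) h

lemma mul_poch_add_one (a : ℂ) (m : ℕ) : a * poch (a + 1) m = poch a m * (a + m) := by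
  rw [← poch_succ', poch_succ]

lemma poch_eq_neg_one_pow_mul (a : ℂ) (k : ℕ) : poch a k = (-1) ^ k * poch (1 - a - k) k := by
  rw [poch, ← neg_neg a, ascPochhammer_eval_neg_eq_descPochhammer,
    descPochhammer_eval_eq_ascPochhammer, poch]
  ring_nf

lemma poch_two_mul (a : ℂ) (m : ℕ) :
    poch a (2 * m) = 4 ^ m * poch (a / 2) m * poch ((a + 1) / 2) m := by
  induction m with
  | zero => simp [poch_zero]
  | succ m ih =>
    rw [show 2 * (m + 1) = 2 * m + 1 + 1 by ring, poch_succ, poch_succ, poch_succ, poch_succ, ih]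
    push_cast
    ring

lemma neg_one_pow_mul_self (j : ℕ) : (-1 : ℂ) ^ j * (-1) ^ j = 1 :=
  pow_mul_pow_eq_one j (by norm_num)

lemma poch_mul_poch_one_sub_sub (z : ℂ) {j N : ℕ} (hjN : j ≤ N) :
    poch z j * poch (1 - z - N) (N - j) = (-1) ^ N * (-1) ^ j * poch z N := by
  have hsgn : (-1 : ℂ) ^ (N - j) * (-1) ^ j = (-1) ^ N := by
    rw [← pow_add, Nat.sub_add_cancel hjN]
  rw [← poch_mul_poch_add_sub z hjN, poch_eq_neg_one_pow_mul (z + j),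
    show 1 - (z + j) - ((N - j : ℕ) : ℂ) = 1 - z - N by push_cast [hjN]; ring]
  linear_combination -(poch z j * poch (1 - z - N) (N - j)) *
    (neg_one_pow_mul_self N + (-1) ^ N * hsgn)

lemma sum_range_succ_diag_flip {M : Type*} [AddCommMonoid M] (n : ℕ) (G : ℕ → ℕ → M) :
    ∑ K ∈ range (n + 1), ∑ m ∈ range (K + 1), G m (K - m) =
      ∑ m ∈ range (n + 1), ∑ k ∈ range (n - m + 1), G m k := by
  rw [sum_range_diag_flip]
  refine sum_congr rfl fun m hm => ?_
  rw [Nat.sub_add_comm (Nat.lt_succ_iff.mp (mem_range.mp hm))]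

open Polynomial in
lemma descPochhammer_smeval_eq_poch (r : ℂ) (k : ℕ) :
    (descPochhammer ℤ k).smeval r = poch (r - k + 1) k := by
  rw [← aeval_eq_smeval, ← eval_map_algebraMap, descPochhammer_map,
    descPochhammer_eval_eq_ascPochhammer, poch]

/-- The falling-factorial Chu–Vandermonde identity of Mathlib, read at `-b` and `c + N - 1`. -/
theorem poch_chu_vandermonde (N : ℕ) (b c : ℂ) :
    ∑ m ∈ range (N + 1), (-1) ^ m * (N.choose m : ℂ) * poch b m * poch (c + m) (N - m) =
      poch (c - b) N := by
  have h := Ring.descPochhammer_smeval_add (r := -b) (s := c + N - 1) N (Commute.all _ _)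
  rw [Nat.sum_antidiagonal_eq_sum_range_succ
    (fun i j => (N.choose i : ℂ) * ((descPochhammer ℤ i).smeval (-b) *
      (descPochhammer ℤ j).smeval (c + N - 1)))] at h
  simp only [descPochhammer_smeval_eq_poch] at h
  rw [show c - b = -b + (c + N - 1) - N + 1 by ring, h]
  refine sum_congr rfl fun m hm => ?_
  rw [poch_eq_neg_one_pow_mul b, Nat.cast_sub (Nat.lt_succ_iff.mp (mem_range.mp hm))]
  ring_nf
  simp [pow_mul']

lemma poch_mul_poch_add_eq_sum (B D : ℂ) {m N : ℕ} (hmN : m ≤ N) :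
    poch B m * poch (D + m) (N - m) =
      ∑ j ∈ range (m + 1), (-1) ^ j * (m.choose j : ℂ) * poch (D - B) j * poch (D + j) (N - j) := by
  conv_lhs => rw [← sub_sub_cancel D B, ← poch_chu_vandermonde, sum_mul]
  refine sum_congr rfl fun j hj => ?_
  have hjm : j ≤ m := Nat.lt_succ_iff.mp (mem_range.mp hj)
  rw [mul_assoc _ (poch (D + j) (m - j)),
    ← poch_mul_poch_add_sub (D + j) (Nat.sub_le_sub_right hmN j), Nat.sub_sub_sub_cancel_right hjm]
  push_cast [hjm]
  ring_nf

lemma sum_choose_mul_choose_mul_poch (A C : ℂ) (j N : ℕ) :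
    ∑ i ∈ range (N - j + 1), (-1) ^ i * (N.choose (j + i) * (j + i).choose j : ℕ) *
        poch A (j + i) * poch (C + (j + i : ℕ)) (N - (j + i)) =
      N.choose j * poch A j * poch (C - A) (N - j) := by
  rw [← add_sub_add_right_eq_sub C A j, ← poch_chu_vandermonde, mul_sum]
  refine sum_congr rfl fun i _ => ?_
  rw [Nat.choose_mul (Nat.le_add_right j i), Nat.add_sub_cancel_left, poch_add, Nat.sub_add_eq]
  push_cast
  ring_nf

/-- The Pfaff–Saalschütz summation, cleared of denominators. -/
theorem poch_saalschutz (N : ℕ) {A B C D : ℂ} (hD : C + D + N = A + B + 1) :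
    ∑ m ∈ range (N + 1), (-1) ^ m * (N.choose m : ℂ) * poch A m * poch B m *
        poch (C + m) (N - m) * poch (D + m) (N - m) =
      poch (C - B) N * poch (D - B) N := by
  calc _ = ∑ m ∈ range (N + 1), ∑ j ∈ range (m + 1),
        (-1) ^ m * (-1) ^ j * (N.choose m * m.choose j : ℕ) * poch A m * poch (C + m) (N - m) *
          (poch (D - B) j * poch (D + j) (N - j)) := by
        refine sum_congr rfl fun m hm => ?_
        calc _ = (-1) ^ m * N.choose m * poch A m * poch (C + m) (N - m) *
              (poch B m * poch (D + m) (N - m)) := by ring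
          _ = _ := by
            rw [poch_mul_poch_add_eq_sum B D (Nat.lt_succ_iff.mp (mem_range.mp hm)), mul_sum]
            refine sum_congr rfl fun j _ => ?_
            push_cast
            ring
    _ = ∑ j ∈ range (N + 1), ∑ i ∈ range (N - j + 1),
        (-1) ^ (j + i) * (-1) ^ j * (N.choose (j + i) * (j + i).choose j : ℕ) * poch A (j + i) *
          poch (C + (j + i : ℕ)) (N - (j + i)) * (poch (D - B) j * poch (D + j) (N - j)) := by
        rw [← sum_range_succ_diag_flip]
        refine sum_congr rfl fun m _ => sum_congr rfl fun j hj => ?_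
        rw [Nat.add_sub_cancel' (Nat.lt_succ_iff.mp (mem_range.mp hj))]
    _ = ∑ j ∈ range (N + 1), N.choose j * poch A j * poch (C - A) (N - j) *
          (poch (D - B) j * poch (D + j) (N - j)) := by
        refine sum_congr rfl fun j _ => ?_
        rw [← sum_choose_mul_choose_mul_poch A C j N, sum_mul]
        refine sum_congr rfl fun i _ => ?_
        rw [pow_add]
        linear_combination (-1) ^ i * ((N.choose (j + i) * (j + i).choose j : ℕ) : ℂ) *
          poch A (j + i) * poch (C + (j + i : ℕ)) (N - (j + i)) *
          (poch (D - B) j * poch (D + j) (N - j)) * neg_one_pow_mul_self j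
    _ = ∑ j ∈ range (N + 1), (-1) ^ N * poch (D - B) N *
          ((-1) ^ j * N.choose j * poch A j * poch (D + j) (N - j)) := by
        refine sum_congr rfl fun j hj => ?_
        have h := poch_mul_poch_one_sub_sub (D - B) (Nat.lt_succ_iff.mp (mem_range.mp hj))
        rw [show 1 - (D - B) - N = C - A by linear_combination -hD] at h
        linear_combination N.choose j * poch A j * poch (D + j) (N - j) * h
    _ = poch (C - B) N * poch (D - B) N := by
        rw [← mul_sum, poch_chu_vandermonde, poch_eq_neg_one_pow_mul (D - A),
          show 1 - (D - A) - N = C - B by linear_combination -hD]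
        linear_combination poch (D - B) N * poch (C - B) N * neg_one_pow_mul_self N

lemma sum_poch_saalschutz_kernel (K : ℕ) (a b c : ℂ) :
    ∑ m ∈ range (K + 1), (-1) ^ m * (K.choose m : ℂ) * poch (a + K) m * poch (1 + a - b - c) m *
        poch (1 + a - b + m) (K - m) * poch (1 + a - c + m) (K - m) =
      poch c K * poch b K := by
  rw [poch_saalschutz K (A := a + K) (B := 1 + a - b - c) (by ring),
    show 1 + a - b - (1 + a - b - c) = c by ring, show 1 + a - c - (1 + a - b - c) = b by ring]

lemma sum_poch_saalschutz_kernel_shift (N : ℕ) (a b c : ℂ) :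
    ∑ m ∈ range (N + 1 + 1), (-1) ^ m * ((N + 1).choose m : ℂ) * poch (a + (N + 1 : ℕ)) m *
        (m * poch (1 + a - b - c) (m - 1)) *
        poch (1 + a - b + m) (N + 1 - m) * poch (1 + a - c + m) (N + 1 - m) =
      -(N + 1) * (a + N + 1) * (poch (c + 1) N * poch (b + 1) N) := by
  rw [sum_range_succ', ← sum_poch_saalschutz_kernel N (a + 2) (b + 1) (c + 1), mul_sum]
  simp only [CharP.cast_eq_zero, zero_mul, mul_zero, add_zero]
  refine sum_congr rfl fun j _ => ?_
  have hchoose : ((j + 1 : ℕ) : ℂ) * ((N + 1).choose (j + 1) : ℕ) = (N + 1) * (N.choose j : ℕ) := by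
    exact_mod_cast ((Nat.add_one_mul_choose_eq N j).trans (mul_comm _ _)).symm
  rw [poch_succ', Nat.add_sub_cancel, Nat.add_sub_add_right, pow_succ]
  push_cast at hchoose ⊢
  rw [show a + (N + 1 : ℂ) + 1 = a + 2 + N by ring,
    show 1 + (a + 2) - (b + 1) - (c + 1) = 1 + a - b - c by ring,
    show 1 + (a + 2) - (b + 1) + (j : ℂ) = 1 + a - b + (j + 1) by ring,
    show 1 + (a + 2) - (c + 1) + (j : ℂ) = 1 + a - c + (j + 1) by ring]
  linear_combination -(-1) ^ j * (a + N + 1) * poch (a + 2 + N) j * poch (1 + a - b - c) j *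
    poch (1 + a - b + (j + 1)) (N - j) * poch (1 + a - c + (j + 1)) (N - j) * hchoose

theorem sum_poch_kernel_mul_linear (K : ℕ) (a b c p : ℂ) :
    ∑ m ∈ range (K + 1), (-1) ^ m * (K.choose m : ℂ) * poch (a + K) m * poch (a - b - c) m *
        poch (1 + a - b + m) (K - m) * poch (1 + a - c + m) (K - m) *
        (p * (a - p) * (b + c - a) + m * (b * c - p * (a - p))) =
      (b + c - a) * poch b K * poch c K * (p + K) * (a - p + K) := by
  -- With `(a - b - c)ₘ` the sum is not Saalschützian; with `(1 + a - b - c)ₘ` it is.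
  have hsplit : ∀ m : ℕ,
      poch (a - b - c) m * (p * (a - p) * (b + c - a) + m * (b * c - p * (a - p))) =
        p * (a - p) * (b + c - a) * poch (1 + a - b - c) m +
          (a - b - c) * b * c * (m * poch (1 + a - b - c) (m - 1))
    | 0 => by simp [poch_zero]
    | j + 1 => by
      rw [poch_succ', poch_succ, Nat.add_sub_cancel, show a - b - c + 1 = 1 + a - b - c by ring]
      push_cast
      ring
  calc _ = p * (a - p) * (b + c - a) * ∑ m ∈ range (K + 1), (-1) ^ m * (K.choose m : ℂ) *
          poch (a + K) m * poch (1 + a - b - c) m *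
          poch (1 + a - b + m) (K - m) * poch (1 + a - c + m) (K - m) +
        (a - b - c) * b * c * ∑ m ∈ range (K + 1), (-1) ^ m * (K.choose m : ℂ) *
          poch (a + K) m * (m * poch (1 + a - b - c) (m - 1)) *
          poch (1 + a - b + m) (K - m) * poch (1 + a - c + m) (K - m) := by
        rw [mul_sum, mul_sum, ← sum_add_distrib]
        refine sum_congr rfl fun m _ => ?_
        linear_combination (-1) ^ m * (K.choose m : ℂ) * poch (a + K) m *
          poch (1 + a - b + m) (K - m) * poch (1 + a - c + m) (K - m) * hsplit m
    _ = _ := by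
      rw [sum_poch_saalschutz_kernel]
      rcases K with _ | N
      · simp only [poch_zero, mul_one, zero_add, range_one, CharP.cast_eq_zero, add_zero,
          zero_tsub, sum_singleton, pow_zero, Nat.choose_self, Nat.cast_one, mul_zero]
        ring
      · rw [sum_poch_saalschutz_kernel_shift, poch_succ' b, poch_succ' c]
        push_cast
        ring

lemma quadratic_coeff_term {a b c γ : ℂ} {m K : ℕ} (hmK : m ≤ K) (hγ : γ ≠ 0)
    (hγm : poch γ m ≠ 0) (hab : poch (1 + a - b) K ≠ 0) (hac : poch (1 + a - c) K ≠ 0) :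
    K.choose m * ((-4) ^ m * (poch (a / 2) m * poch ((a + 1) / 2) m * poch (a - b - c) m *
        poch (γ + 1) m / (poch (1 + a - b) m * poch (1 + a - c) m * poch γ m)) *
        poch (a + 2 * m) (K - m)) =
      poch a K / (poch (1 + a - b) K * poch (1 + a - c) K * γ) *
        ((-1) ^ m * K.choose m * poch (a + K) m * poch (a - b - c) m *
          poch (1 + a - b + m) (K - m) * poch (1 + a - c + m) (K - m) * (γ + m)) := by
  have hdup : 4 ^ m * poch (a / 2) m * poch ((a + 1) / 2) m * poch (a + 2 * m) (K - m) =
      poch a K * poch (a + K) m := by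
    rw [← poch_two_mul, show (2 * m : ℂ) = (2 * m : ℕ) by push_cast; ring, ← poch_add,
      show 2 * m + (K - m) = K + m by omega, poch_add]
  have hγratio : poch (γ + 1) m / poch γ m = (γ + m) / γ := by
    rw [div_eq_div_iff hγm hγ]
    linear_combination mul_poch_add_one γ m
  rw [← poch_mul_poch_add_sub (1 + a - b) hmK] at hab ⊢
  rw [← poch_mul_poch_add_sub (1 + a - c) hmK] at hac ⊢
  obtain ⟨hb, hb'⟩ := mul_ne_zero_iff.mp hab
  obtain ⟨hc, hc'⟩ := mul_ne_zero_iff.mp hac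
  calc _ = K.choose m * (-1) ^ m * poch (a - b - c) m *
        (4 ^ m * poch (a / 2) m * poch ((a + 1) / 2) m * poch (a + 2 * m) (K - m)) *
        (poch (γ + 1) m / poch γ m) / (poch (1 + a - b) m * poch (1 + a - c) m) := by
        rw [show (-4 : ℂ) ^ m = (-1) ^ m * 4 ^ m by rw [← mul_pow]; norm_num]
        ring
    _ = _ := by
      rw [hdup, hγratio]
      field_simp

theorem quadratic_coeff_eq_sum (K : ℕ) {a b c p γ : ℂ} (hβ : b * c - p * (a - p) ≠ 0)
    (hγβ : γ * (b * c - p * (a - p)) = p * (a - p) * (b + c - a))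
    (hab : poch (1 + a - b) K ≠ 0) (hac : poch (1 + a - c) K ≠ 0) (hp : poch p K ≠ 0)
    (hap : poch (a - p) K ≠ 0) (hγ : poch γ K ≠ 0) :
    ([a, b, c, a - p + 1, p + 1].map fun z => poch z K).prod /
        ([1 + a - b, 1 + a - c, p, a - p].map fun z => poch z K).prod =
      ∑ m ∈ range (K + 1), K.choose m * ((-4) ^ m *
        (poch (a / 2) m * poch ((a + 1) / 2) m * poch (a - b - c) m * poch (γ + 1) m /
          (poch (1 + a - b) m * poch (1 + a - c) m * poch γ m)) * poch (a + 2 * m) (K - m)) := by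
  rcases Nat.eq_zero_or_pos K with rfl | hK
  · simp [poch_zero]
  have hγ0 := ne_zero_of_poch_ne_zero hK.ne' hγ
  have hp0 := ne_zero_of_poch_ne_zero hK.ne' hp
  have hap0 := ne_zero_of_poch_ne_zero hK.ne' hap
  set S := ∑ m ∈ range (K + 1), (-1) ^ m * (K.choose m : ℂ) * poch (a + K) m * poch (a - b - c) m *
    poch (1 + a - b + m) (K - m) * poch (1 + a - c + m) (K - m) * (γ + m) with hS_def
  have hS : S * (b * c - p * (a - p)) =
      (b + c - a) * poch b K * poch c K * (p + K) * (a - p + K) := by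
    rw [← sum_poch_kernel_mul_linear, hS_def, sum_mul]
    refine sum_congr rfl fun m _ => ?_
    linear_combination (-1) ^ m * (K.choose m : ℂ) * poch (a + K) m * poch (a - b - c) m *
      poch (1 + a - b + m) (K - m) * poch (1 + a - c + m) (K - m) * hγβ
  rw [sum_congr rfl fun m hm => quadratic_coeff_term (Nat.lt_succ_iff.mp (mem_range.mp hm)) hγ0
    (poch_ne_zero_of_le (Nat.lt_succ_iff.mp (mem_range.mp hm)) hγ) hab hac, ← mul_sum, ← hS_def]
  simp only [List.map_cons, List.map_nil, List.prod_cons, List.prod_nil, mul_one]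
  rw [div_eq_iff (by simp [*]), div_mul_eq_mul_div, div_mul_eq_mul_div, eq_div_iff (by simp [*])]
  apply mul_left_cancel₀ (mul_ne_zero (mul_ne_zero hβ hp0) hap0)
  linear_combination poch a K * poch (1 + a - b) K * poch (1 + a - c) K *
    (p * (a - p) * poch b K * poch c K * poch (a - p + 1) K * poch (p + 1) K * hγβ
      + p * (a - p) * (b + c - a) * poch b K * poch c K * (a - p) * poch (a - p + 1) K *
          mul_poch_add_one p K
      + p * (a - p) * (b + c - a) * poch b K * poch c K * poch p K * (p + K) *
          mul_poch_add_one (a - p) K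
      - p * (a - p) * poch p K * poch (a - p) K * hS)

section HypergeometricWeight

variable {r s : ℕ} (A : Fin r → ℂ) (B : Fin s → ℂ)

noncomputable def hypWeight (n : ℕ) (x : ℂ) (k : ℕ) : ℂ :=
  (∏ i, poch (A i) k) * poch (-(n : ℂ)) k / (k.factorial * ∏ i, poch (B i) k) * x ^ k

lemma hypTerm_append_ofFn (L M : List ℂ) (n : ℕ) (x : ℂ) :
    hypTerm (L ++ List.ofFn A) (M ++ List.ofFn B) n x =
      ∑ k ∈ range (n + 1), (L.map fun z => poch z k).prod / (M.map fun z => poch z k).prod *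
        hypWeight A B n x k := by
  simp only [hypTerm, hypWeight, List.map_append, List.prod_append, List.map_ofFn, List.prod_ofFn,
    Function.comp_def]
  refine sum_congr rfl fun k _ => ?_
  ring

lemma hypTerm_cons_ofFn (z : ℂ) (n : ℕ) (x : ℂ) :
    hypTerm (z :: List.ofFn A) (List.ofFn B) n x =
      ∑ k ∈ range (n + 1), poch z k * hypWeight A B n x k := by
  simpa using hypTerm_append_ofFn A B [z] [] n x

lemma hypWeight_mul_hypWeight (x : ℂ) {m K n : ℕ} (hmK : m ≤ K) (hKn : K ≤ n) :
    hypWeight A B n x m * hypWeight (fun i => A i + m) (fun i => B i + m) (n - m) x (K - m) =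
      K.choose m * hypWeight A B n x K := by
  have hfac : ((m.factorial : ℂ) * (K - m).factorial)⁻¹ = K.choose m * (K.factorial : ℂ)⁻¹ := by
    have hC : (K.choose m : ℂ) ≠ 0 := by exact_mod_cast (Nat.choose_pos hmK).ne'
    rw [← Nat.choose_mul_factorial_mul_factorial hmK]
    push_cast
    field_simp
  simp only [hypWeight, ← poch_mul_poch_add_sub _ hmK, prod_mul_distrib]
  rw [← pow_mul_pow_sub x hmK, show -(n : ℂ) + m = -((n - m : ℕ) : ℂ) by
    push_cast [hmK.trans hKn]; ring]
  linear_combination (∏ i, poch (A i) m) * (∏ i, poch (A i + m) (K - m)) * poch (-(n : ℂ)) m *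
    poch (-((n - m : ℕ) : ℂ)) (K - m) * x ^ m * x ^ (K - m) * (∏ i, poch (B i) m)⁻¹ *
    (∏ i, poch (B i + m) (K - m))⁻¹ * hfac

end HypergeometricWeight

theorem proposition_11P1_general (n r s : ℕ) (a b c p x : ℂ) (A : Fin r → ℂ) (B : Fin s → ℂ)
    (hbc : b * c - p * (a - p) ≠ 0) (γ : ℂ)
    (hγ : γ = p * (a - p) * (b + c - a) / (b * c - p * (a - p)))
    (hnd : ∀ z ∈ [1 + a - b, 1 + a - c, p, a - p, γ], ∀ k ≤ n, poch z k ≠ 0) :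
    hypTerm ([a, b, c, a - p + 1, p + 1] ++ List.ofFn A)
        ([1 + a - b, 1 + a - c, p, a - p] ++ List.ofFn B) n x
      = ∑ m ∈ Finset.range (n + 1),
          (poch (a / 2) m * poch ((a + 1) / 2) m * poch (a - b - c) m * poch (γ + 1) m *
              (List.ofFn fun i => poch (A i) m).prod * poch (-(n : ℂ)) m * (-4 * x) ^ m) /
            ((m.factorial : ℂ) * poch (1 + a - b) m * poch (1 + a - c) m * poch γ m *
              (List.ofFn fun i => poch (B i) m).prod) *
          hypTerm ((a + 2 * (m : ℂ)) :: List.ofFn (fun i => A i + (m : ℂ)))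
            (List.ofFn (fun i => B i + (m : ℂ))) (n - m) x := by
  have hγβ : γ * (b * c - p * (a - p)) = p * (a - p) * (b + c - a) := by
    rw [hγ]
    field_simp
  simp only [hypTerm_append_ofFn, hypTerm_cons_ofFn, mul_sum]
  rw [← sum_range_succ_diag_flip]
  refine sum_congr rfl fun K hK => ?_
  have hKn : K ≤ n := Nat.lt_succ_iff.mp (mem_range.mp hK)
  rw [quadratic_coeff_eq_sum K hbc hγβ (hnd _ (by simp) K hKn) (hnd _ (by simp) K hKn)
    (hnd _ (by simp) K hKn) (hnd _ (by simp) K hKn) (hnd _ (by simp) K hKn), sum_mul]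
  refine sum_congr rfl fun m hm => ?_
  rw [mul_right_comm, ← hypWeight_mul_hypWeight A B x (Nat.lt_succ_iff.mp (mem_range.mp hm)) hKn]
  simp only [hypWeight, List.prod_ofFn]
  ring

theorem proposition_11P1 (n r s : ℕ) (a b c p x : ℂ) (A : Fin r → ℂ) (B : Fin s → ℂ)
    (hbc : b * c - p * (a - p) ≠ 0) (γ : ℂ)
    (hγ : γ = p * (a - p) * (b + c - a) / (b * c - p * (a - p)))
    (hnd : ∀ z ∈ [1 + a - b, 1 + a - c, p, a - p, γ], ∀ k ≤ n, poch z k ≠ 0)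
    (hB : ∀ i : Fin s, ∀ m k : ℕ, m + k ≤ n → poch (B i + (m : ℂ)) k ≠ 0) :
    hypTerm ([a, b, c, a - p + 1, p + 1] ++ List.ofFn A)
        ([1 + a - b, 1 + a - c, p, a - p] ++ List.ofFn B) n x
      = ∑ m ∈ Finset.range (n + 1),
          (poch (a / 2) m * poch ((a + 1) / 2) m * poch (a - b - c) m * poch (γ + 1) m *
              (List.ofFn fun i => poch (A i) m).prod * poch (-(n : ℂ)) m * (-4 * x) ^ m) /
            ((m.factorial : ℂ) * poch (1 + a - b) m * poch (1 + a - c) m * poch γ m *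
              (List.ofFn fun i => poch (B i) m).prod) *
          hypTerm ((a + 2 * (m : ℂ)) :: List.ofFn (fun i => A i + (m : ℂ)))
            (List.ofFn (fun i => B i + (m : ℂ))) (n - m) x :=
  proposition_11P1_general n r s a b c p x A B hbc γ hγ hnd
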